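/- arXiv:1209.5119 — 2 statements merged into one kernel-verified Lean document; each statement's English description precedes it below -/
import Mathlib

section
/- In Baker's interval game with a countable target set S ⊆ [0,1], Bob has a winning strategy: there exists a strategy for Bob (a rule assigning to each finite history of legal moves a legal response) such that for every play in which Alice first chooses a_1 with 0 < a_1 < 1, Bob responds with b_1 with a_1 < b_1 < 1, and thereafter Alice chooses a_n with a_{n-1} < a_n < b_{n-1} and Bob responds according to his strategy with b_n satisfying a_n < b_n < b_{n-1}, the limit η = lim_{n→∞} a_n (which exists since (a_n) is increasing and bounded) does not belong to S. -/
/-- One step of Bob's strategy: given target `s`, Alice's move `a`, and the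
previous upper bound `c`, reply with the midpoint of `(a, min c s)` if `a < s`,
else the midpoint of `(a, c)`. -/
noncomputable def bakerStep (s a c : ℝ) : ℝ :=
  (a + (if a < s then min c s else c)) / 2

lemma bakerStep_lt (s a c : ℝ) (h : a < c) :
    a < bakerStep s a c ∧ bakerStep s a c < c ∧ (a < s → bakerStep s a c < s) := by
  unfold bakerStep
  split_ifs with hs
  · have hm : a < min c s := lt_min h hs
    refine ⟨by linarith, ?_, fun _ => ?_⟩
    · have : min c s ≤ c := min_le_left _ _; linarith
    · have : min c s ≤ s := min_le_right _ _; linarith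
  · exact ⟨by linarith, by linarith, fun h' => absurd h' hs⟩

/-- Bob's full strategy given an enumeration `f` of the target set. -/
noncomputable def bakerAux (f : ℕ → ℝ) : (n : ℕ) → (Fin (n + 1) → ℝ) → ℝ
  | 0, h => bakerStep (f 0) (h 0) 1
  | (n + 1), h =>
      bakerStep (f (n + 1)) (h (Fin.last (n + 1)))
        (bakerAux f n (fun i => h i.castSucc))

/-- Baker's interval game: given a countable target set `S ⊆ [0,1]`, Bob has a
winning strategy.  A strategy for Bob is a rule `σ` which, given Alice's moves
`a_0, …, a_n` played so far (Bob's own earlier moves are recovered by applying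
`σ` to shorter histories), outputs Bob's next move.  We assert that there is a
strategy `σ` such that, in every play in which Alice moves legally
(`0 < a 0 < 1` and `a n < a (n+1) < b n`, where `b n = σ n (a_0, …, a_n)` is
Bob's reply), Bob's replies are themselves legal
(`a n < b n`, `b 0 < 1`, `b (n+1) < b n`) and the limit `η` of the increasing
bounded sequence `(a n)` does not belong to `S`. -/
theorem baker_game_bob_wins (S : Set ℝ) (hS : S ⊆ Set.Icc 0 1)
    (hcount : S.Countable) :
    ∃ σ : (n : ℕ) → (Fin (n + 1) → ℝ) → ℝ,
      ∀ a : ℕ → ℝ,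
        0 < a 0 → a 0 < 1 →
        (∀ n, a n < a (n + 1) ∧ a (n + 1) < σ n (fun i => a i)) →
        (∀ n, a n < σ n (fun i => a i)) ∧
        σ 0 (fun i => a i) < 1 ∧
        (∀ n, σ (n + 1) (fun i => a i) < σ n (fun i => a i)) ∧
        ∀ η : ℝ, Filter.Tendsto a Filter.atTop (nhds η) → η ∉ S := by
  obtain ⟨f, hf⟩ := Set.Countable.exists_eq_range (hcount.insert 2)
    (Set.insert_nonempty _ _)
  have hSf : S ⊆ Set.range f := by rw [← hf]; exact Set.subset_insert _ _
  refine ⟨bakerAux f, fun a ha0 ha1 hA => ?_⟩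
  set b : ℕ → ℝ := fun n => bakerAux f n (fun i => a i) with hb
  -- the recursive unfolding
  have hrec : ∀ n, b (n + 1) = bakerStep (f (n + 1)) (a (n + 1)) (b n) := by
    intro n
    show bakerAux f (n + 1) (fun i => a i) = _
    rw [bakerAux]
    rfl
  have key : ∀ n, a n < b n ∧ b n < (if n = 0 then 1 else b (n - 1)) ∧
      (a n < f n → b n < f n) := by
    intro n
    induction n with
    | zero =>
        have := bakerStep_lt (f 0) (a 0) 1 ha1
        simpa [b, bakerAux] using this
    | succ n ih =>
        have hc : a (n + 1) < b n := (hA n).2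
        have := bakerStep_lt (f (n + 1)) (a (n + 1)) (b n) hc
        rw [← hrec n] at this
        simpa using this
  have hab : ∀ n, a n < b n := fun n => (key n).1
  have hb0 : b 0 < 1 := by simpa using (key 0).2.1
  have hbdec : ∀ n, b (n + 1) < b n := by
    intro n; have := (key (n + 1)).2.1; simpa using this
  have hbanti : StrictAnti b := strictAnti_nat_of_succ_lt hbdec
  have hamono : StrictMono a := strictMono_nat_of_lt_succ (fun n => (hA n).1)
  refine ⟨hab, hb0, hbdec, ?_⟩
  intro η hη hηS
  -- η ≤ b n for all n
  have hle : ∀ n, η ≤ b n := by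
    intro n
    refine le_of_tendsto hη (Filter.Eventually.of_forall fun m => ?_)
    rcases le_or_gt m n with h | h
    · exact le_of_lt (lt_of_le_of_lt (hamono.monotone h) (hab n))
    · refine le_of_lt ?_
      calc a m < b (m - 1) := by
              obtain ⟨k, rfl⟩ := Nat.exists_eq_add_of_lt h
              simpa using (hA (n + k)).2
        _ ≤ b n := hbanti.antitone (by omega)
  have hgt : ∀ n, a n < η := by
    intro n
    have h1 : a (n + 1) ≤ η :=
      ge_of_tendsto hη (Filter.eventually_atTop.2 ⟨n + 1, fun m hm => hamono.monotone hm⟩)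
    exact lt_of_lt_of_le (hamono (Nat.lt_succ_self n)) h1
  obtain ⟨k, hk⟩ := hSf hηS
  rcases lt_or_ge (a k) (f k) with h | h
  · have : b k < f k := (key k).2.2 h
    exact absurd (hle k) (by rw [← hk]; linarith)
  · exact absurd (hgt k) (by rw [hk] at h; linarith)
end

section
/- In the diagonalization digit game with a countable target set S ⊆ [0,1], Bob has a winning strategy: there exists a function β assigning to each finite sequence of Alice's digit choices a digit in {0,…,9}, such that for every sequence of Alice's choices a_1, a_2, … ∈ {0,…,9}, setting b_n = β(a_1,…,a_n) and z_n = (a_n + b_n) mod 10, the real number 0.z_1 z_2 z_3 … (the sum ∑_{n≥1} z_n/10^n) is not an element of S. -/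
open scoped BigOperators

lemma summable_digits (z : ℕ → ℕ) (hz : ∀ k, z k ≤ 9) :
    Summable (fun k : ℕ => (z k : ℝ) / 10 ^ (k + 1)) := by
  have hg : Summable (fun k : ℕ => (9 : ℝ) * (1/10) ^ (k+1)) :=
    ((summable_geometric_of_lt_one (by norm_num) (by norm_num)).mul_left 9).comp_injective
      (add_left_injective 1)
  refine Summable.of_nonneg_of_le (fun k => by positivity) (fun k => ?_) hg
  rw [mul_comm, div_pow, one_pow, div_mul_eq_mul_div, one_mul]
  gcongr
  exact_mod_cast hz k

lemma tail_bound (z : ℕ → ℕ) (hz : ∀ k, z k ≤ 9) (n : ℕ) :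
    (∑' k : ℕ, (z (k + (n+1)) : ℝ) / 10 ^ (k + (n+1) + 1)) ≤ 1 / 10 ^ (n+1) := by
  have hs := (summable_digits z hz).comp_injective (add_left_injective (n+1))
  have hg : Summable (fun k : ℕ => (9 : ℝ) / 10 ^ (k + (n+1) + 1)) :=
    (summable_digits (fun _ => 9) (fun _ => le_refl 9)).comp_injective
      (add_left_injective (n+1))
  have h1 : (∑' k : ℕ, (z (k + (n+1)) : ℝ) / 10 ^ (k + (n+1) + 1)) ≤
      ∑' k : ℕ, (9 : ℝ) / 10 ^ (k + (n+1) + 1) := by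
    refine Summable.tsum_le_tsum (fun k => ?_) hs hg
    gcongr
    exact_mod_cast hz _
  refine h1.trans_eq ?_
  have : ∀ k : ℕ, (9 : ℝ) / 10 ^ (k + (n+1) + 1) = (9 / 10 ^ (n+2)) * (1/10)^k := by
    intro k
    rw [div_pow, one_pow]
    field_simp
    ring
  rw [tsum_congr this, tsum_mul_left, tsum_geometric_of_lt_one (by norm_num) (by norm_num)]
  rw [show (1 : ℝ) - 1/10 = 9/10 by norm_num]
  rw [pow_succ]
  field_simp

lemma digit_floor (z : ℕ → ℕ) (hz : ∀ k, z k ≤ 9) (n : ℕ) :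
    ((∑ k ∈ Finset.range (n+1), z k * 10 ^ (n - k) : ℕ) : ℝ) ≤
      (∑' k : ℕ, (z k : ℝ) / 10 ^ (k + 1)) * 10 ^ (n+1) ∧
    (∑' k : ℕ, (z k : ℝ) / 10 ^ (k + 1)) * 10 ^ (n+1) ≤
      ((∑ k ∈ Finset.range (n+1), z k * 10 ^ (n - k) : ℕ) : ℝ) + 1 := by
  have hs := summable_digits z hz
  have hsplit := (Summable.sum_add_tsum_nat_add (f := fun k : ℕ => (z k : ℝ) / 10 ^ (k + 1)) (n+1) hs)
  set T : ℝ := ∑' k : ℕ, (z (k + (n+1)) : ℝ) / 10 ^ (k + (n+1) + 1) with hT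
  have hx : (∑' k : ℕ, (z k : ℝ) / 10 ^ (k + 1)) =
      (∑ k ∈ Finset.range (n+1), (z k : ℝ) / 10 ^ (k + 1)) + T := hsplit.symm
  have hP : (∑ k ∈ Finset.range (n+1), (z k : ℝ) / 10 ^ (k + 1)) * 10 ^ (n+1) =
      ((∑ k ∈ Finset.range (n+1), z k * 10 ^ (n - k) : ℕ) : ℝ) := by
    push_cast
    rw [Finset.sum_mul]
    refine Finset.sum_congr rfl fun k hk => ?_
    have hk' : k < n + 1 := Finset.mem_range.mp hk
    have hpow : (10 : ℝ) ^ (n+1) = 10 ^ (k+1) * 10 ^ (n-k) := by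
      rw [← pow_add]
      congr 1
      omega
    rw [hpow]
    have h10 : (10 : ℝ) ^ (k+1) ≠ 0 := by positivity
    field_simp
  have hT0 : 0 ≤ T := tsum_nonneg (fun k => by positivity)
  have hT1 : T ≤ 1 / 10 ^ (n+1) := tail_bound z hz n
  constructor
  · rw [hx, add_mul, hP]
    nlinarith [pow_pos (by norm_num : (0:ℝ) < 10) (n+1)]
  · rw [hx, add_mul, hP]
    have : T * 10 ^ (n+1) ≤ 1 := by
      have hp : (0:ℝ) < 10 ^ (n+1) := by positivity
      calc T * 10 ^ (n+1) ≤ (1 / 10 ^ (n+1)) * 10 ^ (n+1) := by gcongr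
        _ = 1 := by field_simp
    linarith

/-- The diagonalization digit game: given a countable target set `S ⊆ [0,1]`,
Bob has a winning strategy.  A strategy for Bob is a function `β` assigning to
each finite sequence of Alice's digit choices `a_1, …, a_n ∈ {0,…,9}` a digit
`b_n ∈ {0,…,9}`.  We assert that there is a `β` such that for every sequence of
Alice's digit choices `a : ℕ → Fin 10`, with `b n = β n (a_0, …, a_n)` and
`z n = (a n + b n) mod 10`, the constructed real number `∑ z_n / 10^(n+1)`
is not in `S`. -/
theorem diagonal_game_bob_wins (S : Set ℝ) (hS : S ⊆ Set.Icc 0 1)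
    (hcount : S.Countable) :
    ∃ β : (n : ℕ) → (Fin (n + 1) → Fin 10) → Fin 10,
      ∀ a : ℕ → Fin 10,
        (∑' n : ℕ,
            ((((a n : ℕ) + ((β n fun i => a i) : ℕ)) % 10 : ℕ) : ℝ) / 10 ^ (n + 1))
          ∉ S := by
  rcases S.eq_empty_or_nonempty with rfl | hne
  · exact ⟨fun _ _ => 0, fun a => Set.notMem_empty _⟩
  obtain ⟨f, hf⟩ := Set.Countable.exists_eq_range hcount hne
  set d : ℕ → ℕ := fun n => (⌊f n * 10 ^ (n+1)⌋).toNat % 10 with hd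
  refine ⟨fun n v => ⟨(d n + 12 - (v (Fin.last n) : ℕ)) % 10, Nat.mod_lt _ (by norm_num)⟩, ?_⟩
  intro a hx
  set z : ℕ → ℕ := fun n => (d n + 2) % 10 with hzdef
  have hz9 : ∀ k, z k ≤ 9 := fun k => Nat.lt_succ_iff.mp (Nat.mod_lt _ (by norm_num))
  have hxe : (∑' n : ℕ,
      ((((a n : ℕ) + ((⟨(d n + 12 - ((fun i : Fin (n+1) => a i) (Fin.last n) : ℕ)) % 10,
          Nat.mod_lt _ (by norm_num)⟩ : Fin 10) : ℕ)) % 10 : ℕ) : ℝ) / 10 ^ (n + 1)) =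
      ∑' n : ℕ, (z n : ℝ) / 10 ^ (n + 1) := by
    refine tsum_congr fun n => ?_
    congr 2
    simp only [Fin.val_last, hzdef]
    have ha : (a n : ℕ) ≤ 9 := Nat.lt_succ_iff.mp (a n).isLt
    omega
  rw [hxe] at hx
  set x : ℝ := ∑' n : ℕ, (z n : ℝ) / 10 ^ (n + 1) with hxdef
  rw [hf] at hx
  obtain ⟨n, hfn⟩ := hx
  obtain ⟨hlo, hhi⟩ := digit_floor z hz9 n
  set N : ℕ := ∑ k ∈ Finset.range (n+1), z k * 10 ^ (n - k) with hN
  -- N % 10 = z n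
  have hNmod : N % 10 = z n % 10 := by
    have hsum : N = (∑ k ∈ Finset.range n, z k * 10 ^ (n - k)) + z n * 10 ^ (n - n) := by
      rw [hN, Finset.sum_range_succ]
    have hdvd : 10 ∣ ∑ k ∈ Finset.range n, z k * 10 ^ (n - k) := by
      refine Finset.dvd_sum fun k hk => ?_
      have : k < n := Finset.mem_range.mp hk
      exact Dvd.dvd.mul_left (dvd_pow_self 10 (by omega : n - k ≠ 0)) _
    rw [hsum, Nat.sub_self, pow_zero, mul_one]
    omega
  -- floor bounds
  have hfloor_lo : (N : ℤ) ≤ ⌊x * 10 ^ (n+1)⌋ := by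
    rw [Int.le_floor]
    push_cast
    exact hlo
  have hfloor_hi : ⌊x * 10 ^ (n+1)⌋ ≤ (N : ℤ) + 1 := by
    have h1 : (⌊x * 10 ^ (n+1)⌋ : ℝ) ≤ (N : ℝ) + 1 := (Int.floor_le _).trans hhi
    exact_mod_cast h1
  have hdn : d n = (⌊x * 10 ^ (n+1)⌋).toNat % 10 := by
    rw [hd]
    simp only
    rw [hfn]
  have hzn : z n = (d n + 2) % 10 := rfl
  set m : ℕ := (⌊x * 10 ^ (n+1)⌋).toNat with hm
  have hmN : m = N ∨ m = N + 1 := by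
    have h0 : (0:ℤ) ≤ ⌊x * 10 ^ (n+1)⌋ := le_trans (by positivity) hfloor_lo
    have : (m : ℤ) = ⌊x * 10 ^ (n+1)⌋ := Int.toNat_of_nonneg h0
    omega
  omega
end
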